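/- arXiv:2504.02583 — 2 statements merged into one kernel-verified Lean document; each statement's English description precedes it below -/
import Mathlib

section
/- Let m,n be positive integers, γ ∈ [0,1)^m, and let A be an m×n real matrix such that for every decreasing ψ : ℕ → [0,∞) with ∑_{q≥1} q^{n-1} ψ(q)^m = ∞ there are infinitely many q ∈ ℤ^n with ⟨Aq − γ⟩ < ψ(‖q‖). Then A is γ-singular with exponent 1: for every ε > 0 and all sufficiently large T ∈ ℕ there exists q ∈ ℤ^n with 1 ≤ ‖q‖^n ≤ T and ⟨Aq − γ⟩^m < ε/T. -/
open Filter

/-- The supremum norm of an integer vector, as a natural number. -/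
def znn {n : ℕ} (q : Fin n → ℤ) : ℕ := Finset.univ.sup fun i => (q i).natAbs

/-- Supremum-norm distance of `y ∈ ℝ^m` to the integer lattice `ℤ^m`. -/
noncomputable def dz {m : ℕ} (y : Fin m → ℝ) : ℝ := ⨅ p : Fin m → ℤ, ‖y - fun i => (p i : ℝ)‖

/-- `⟨Aq - γ⟩`, the approximation error. -/
noncomputable def approxErr {m n : ℕ} (A : Matrix (Fin m) (Fin n) ℝ) (γ : Fin m → ℝ)
    (q : Fin n → ℤ) : ℝ := dz (A.mulVec (fun i => (q i : ℝ)) - γ)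

/-- `min_{q ∈ ℤ^n, l ≤ ‖q‖ ≤ t} ⟨Aq - γ⟩^m`. -/
noncomputable def minErr {m n : ℕ} (A : Matrix (Fin m) (Fin n) ℝ) (γ : Fin m → ℝ)
    (l t : ℕ) : ℝ :=
  sInf {x | ∃ q : Fin n → ℤ, l ≤ znn q ∧ znn q ≤ t ∧ x = approxErr A γ q ^ m}

/-! If `A` is not singular, there are `ε > 0` and arbitrarily large scales `L` such that
`⟨Aq - γ⟩^m ≥ ε / (L + 1)^n` whenever `1 ≤ ‖q‖ ≤ L`. Picking such scales `L_k` with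
`L_{k+1} > 2 L_k` and setting `ψ(t)^m = ε / (L_k + 1)^n` for `L_{k-1} < t ≤ L_k` gives a decreasing
`ψ` with `⟨Aq - γ⟩ ≥ ψ(‖q‖)` for every `q ≠ 0`, while each block `(L_k / 2, L_k]` contributes at
least `ε / 2^(n+1)` to `∑ t^(n-1) ψ(t)^m`, so this series diverges. -/

open Finset

lemma znn_eq_zero_iff {n : ℕ} {q : Fin n → ℤ} : znn q = 0 ↔ q = 0 := by
  simp [znn, funext_iff]

lemma approxErr_nonneg {m n : ℕ} (A : Matrix (Fin m) (Fin n) ℝ) (γ : Fin m → ℝ)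
    (q : Fin n → ℤ) : 0 ≤ approxErr A γ q :=
  Real.iInf_nonneg fun _ => norm_nonneg _

lemma Nat.exists_pow_le_lt_succ_pow {n : ℕ} (hn : n ≠ 0) (T : ℕ) :
    ∃ L, L ^ n ≤ T ∧ T < (L + 1) ^ n := by
  have hex : ∃ L, T < (L + 1) ^ n := ⟨T, (Nat.lt_succ_self T).trans_le (Nat.le_self_pow hn _)⟩
  refine ⟨Nat.find hex, ?_, Nat.find_spec hex⟩
  rcases h : Nat.find hex with _ | j
  · simp [hn]
  · simpa using Nat.find_min hex (h ▸ Nat.lt_succ_self j)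

lemma succ_pow_div_two_pow_le_sum_Ioc {n l : ℕ} (hn : 0 < n) (hl : 1 ≤ l) :
    ((l : ℝ) + 1) ^ n / 2 ^ (n + 1) ≤ ∑ t ∈ Ioc (l / 2) l, (t : ℝ) ^ (n - 1) := by
  have hterm : ∀ t ∈ Ioc (l / 2) l, (((l : ℝ) + 1) / 2) ^ (n - 1) ≤ (t : ℝ) ^ (n - 1) := by
    intro t ht
    rw [mem_Ioc] at ht
    have : (l : ℝ) + 1 ≤ 2 * t := by exact_mod_cast (by omega : l + 1 ≤ 2 * t)
    gcongr
    linarith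
  have hcard : ((l : ℝ) + 1) / 4 ≤ #(Ioc (l / 2) l) := by
    rw [Nat.card_Ioc]
    have : (l : ℝ) + 1 ≤ 4 * ((l - l / 2 : ℕ) : ℝ) := by
      exact_mod_cast (by omega : l + 1 ≤ 4 * (l - l / 2))
    linarith
  calc ((l : ℝ) + 1) ^ n / 2 ^ (n + 1)
      = ((l : ℝ) + 1) / 4 * (((l : ℝ) + 1) / 2) ^ (n - 1) := by
        obtain ⟨k, rfl⟩ : ∃ k, n = k + 1 := ⟨n - 1, by omega⟩
        rw [Nat.add_sub_cancel, div_pow]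
        ring
    _ ≤ #(Ioc (l / 2) l) * (((l : ℝ) + 1) / 2) ^ (n - 1) := by gcongr
    _ ≤ ∑ t ∈ Ioc (l / 2) l, (t : ℝ) ^ (n - 1) := by
        simpa using card_nsmul_le_sum _ _ _ hterm

lemma not_summable_of_le_sum_Ioc {f : ℕ → ℝ} (hf : ∀ t, 0 ≤ f t) {a : ℕ → ℕ} (ha : Monotone a)
    {c : ℝ} (hc : 0 < c) (hblock : ∀ k, c ≤ ∑ t ∈ Ioc (a k) (a (k + 1)), f t) :
    ¬ Summable f := by
  intro hsum
  have hpartial : ∀ N : ℕ, N * c ≤ ∑ t ∈ Ioc (a 0) (a N), f t := by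
    intro N
    induction N with
    | zero => simp
    | succ N ih =>
      rw [← sum_Ioc_consecutive f (ha (Nat.zero_le N)) (ha N.le_succ)]
      push_cast
      linarith [hblock N]
  obtain ⟨N, hN⟩ := exists_nat_gt ((∑' t, f t) / c)
  rw [div_lt_iff₀ hc] at hN
  linarith [hpartial N, hsum.sum_le_tsum (Ioc (a 0) (a N)) fun t _ => hf t]

noncomputable def firstAbove (s : ℕ → ℕ) (t : ℕ) : ℕ := sInf {k | t ≤ s k}

section firstAbove

variable {s : ℕ → ℕ}

lemma le_apply_firstAbove (hs : StrictMono s) (t : ℕ) : t ≤ s (firstAbove s t) :=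
  Nat.sInf_mem (s := {k | t ≤ s k}) ⟨t, hs.le_apply⟩

lemma monotone_firstAbove (hs : StrictMono s) : Monotone (firstAbove s) :=
  fun _ t' h => Nat.sInf_le (h.trans (le_apply_firstAbove hs t'))

lemma firstAbove_eq_succ (hs : StrictMono s) {k t : ℕ} (hkt : s k < t) (hts : t ≤ s (k + 1)) :
    firstAbove s t = k + 1 := by
  have hle : firstAbove s t ≤ k + 1 := Nat.sInf_le hts
  have hgt : k < firstAbove s t :=
    hs.lt_iff_lt.mp (hkt.trans_le (le_apply_firstAbove hs t))
  omega

lemma not_summable_pow_mul_div_firstAbove {n : ℕ} (hn : 0 < n) {c : ℝ} (hc : 0 < c)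
    (hs : ∀ k, 2 * s k < s (k + 1)) :
    ¬ Summable fun t : ℕ => (t : ℝ) ^ (n - 1) * (c / ((s (firstAbove s t) : ℝ) + 1) ^ n) := by
  have hmono : StrictMono s := strictMono_nat_of_lt_succ fun k => by have := hs k; omega
  refine not_summable_of_le_sum_Ioc (fun t => by positivity) hmono.monotone
    (c := c / 2 ^ (n + 1)) (by positivity) fun k => ?_
  set l := s (k + 1)
  have hl : 1 ≤ l := by have := hs k; omega
  have hblock : ∀ t ∈ Ioc (l / 2) l, firstAbove s t = k + 1 := fun t ht => by
    rw [mem_Ioc] at ht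
    exact firstAbove_eq_succ hmono (by have := hs k; omega) ht.2
  calc c / 2 ^ (n + 1)
      = ((l : ℝ) + 1) ^ n / 2 ^ (n + 1) * (c / ((l : ℝ) + 1) ^ n) := by field_simp
    _ ≤ (∑ t ∈ Ioc (l / 2) l, (t : ℝ) ^ (n - 1)) * (c / ((l : ℝ) + 1) ^ n) := by
        gcongr
        exact succ_pow_div_two_pow_le_sum_Ioc hn hl
    _ = ∑ t ∈ Ioc (l / 2) l, (t : ℝ) ^ (n - 1) * (c / ((s (firstAbove s t) : ℝ) + 1) ^ n) := by
        rw [sum_mul]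
        refine sum_congr rfl fun t ht => ?_
        rw [hblock t ht]
    _ ≤ ∑ t ∈ Ioc (s k) l, (t : ℝ) ^ (n - 1) * (c / ((s (firstAbove s t) : ℝ) + 1) ^ n) := by
        refine sum_le_sum_of_subset_of_nonneg (Ioc_subset_Ioc_left ?_) fun t _ _ => by positivity
        have := hs k
        omega

end firstAbove

section scales

variable {α : Type*} (ν : α → ℕ) (f : α → ℝ) {n : ℕ} {ε : ℝ}

lemma exists_scale_of_frequently (hn : n ≠ 0) (hε : 0 ≤ ε)
    (h : ∀ T₀ : ℕ, ∃ T, T₀ ≤ T ∧ ∀ a, 1 ≤ ν a → (ν a : ℝ) ^ n ≤ T → ε / T ≤ f a) (N : ℕ) :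
    ∃ L, N < L ∧ ∀ a, 1 ≤ ν a → ν a ≤ L → ε / ((L : ℝ) + 1) ^ n ≤ f a := by
  obtain ⟨T, hNT, hT⟩ := h ((N + 1) ^ n)
  obtain ⟨L, hLT, hTL⟩ := Nat.exists_pow_le_lt_succ_pow hn T
  refine ⟨L, ?_, fun a ha haL => ?_⟩
  · have := hNT.trans_lt hTL
    exact Nat.succ_lt_succ_iff.mp ((Nat.pow_lt_pow_iff_left hn).mp this)
  · have hT0 : (0 : ℝ) < T := by exact_mod_cast (Nat.pow_pos N.succ_pos).trans_le hNT
    calc ε / ((L : ℝ) + 1) ^ n ≤ ε / T := by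
          gcongr
          exact_mod_cast hTL.le
      _ ≤ f a := hT a ha (by exact_mod_cast (Nat.pow_le_pow_left haL n).trans hLT)

lemma exists_doubling_scales_of_frequently (hn : n ≠ 0) (hε : 0 ≤ ε)
    (h : ∀ T₀ : ℕ, ∃ T, T₀ ≤ T ∧ ∀ a, 1 ≤ ν a → (ν a : ℝ) ^ n ≤ T → ε / T ≤ f a) :
    ∃ s : ℕ → ℕ, (∀ k, 2 * s k < s (k + 1)) ∧
      ∀ k a, 1 ≤ ν a → ν a ≤ s k → ε / ((s k : ℝ) + 1) ^ n ≤ f a := by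
  obtain ⟨s, hs_scale, hs_double⟩ := exists_seq_of_forall_finset_exists
    (fun L => ∀ a, 1 ≤ ν a → ν a ≤ L → ε / ((L : ℝ) + 1) ^ n ≤ f a) (fun x y => 2 * x < y)
    fun S _ => by
      obtain ⟨L, hSL, hL⟩ := exists_scale_of_frequently ν f hn hε h (2 * S.sup id)
      exact ⟨L, hL, fun x hx => (Nat.mul_le_mul_left 2 (Finset.le_sup (f := id) hx)).trans_lt hSL⟩
  exact ⟨s, fun k => hs_double k (k + 1) k.lt_succ_self, hs_scale⟩

end scales

theorem omega_subset_sing_general (m n : ℕ) (hm : 0 < m) (hn : 0 < n)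
    (A : Matrix (Fin m) (Fin n) ℝ) (γ : Fin m → ℝ)
    (hΩ : ∀ ψ : ℕ → ℝ, Antitone ψ → (∀ q, 0 ≤ ψ q) →
        ¬ Summable (fun q : ℕ => (q : ℝ) ^ (n - 1) * ψ q ^ m) →
        {q : Fin n → ℤ | approxErr A γ q < ψ (znn q)}.Infinite) :
    ∀ ε : ℝ, 0 < ε → ∃ T₀ : ℕ, ∀ T : ℕ, T₀ ≤ T → ∃ q : Fin n → ℤ,
      1 ≤ znn q ∧ (znn q : ℝ) ^ n ≤ (T : ℝ) ∧ approxErr A γ q ^ m < ε / T := by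
  by_contra! hbad
  obtain ⟨ε, hε, hbad⟩ := hbad
  obtain ⟨s, hs_double, hs_scale⟩ :=
    exists_doubling_scales_of_frequently znn (approxErr A γ · ^ m) hn.ne' hε.le hbad
  have hs : StrictMono s := strictMono_nat_of_lt_succ fun k => by have := hs_double k; omega
  set φ : ℕ → ℝ := fun t => ε / ((s (firstAbove s t) : ℝ) + 1) ^ n
  have hφ_nonneg : ∀ t, 0 ≤ φ t := fun t => by positivity
  have hφ_anti : Antitone φ := fun t t' htt' => by
    have := hs.monotone (monotone_firstAbove hs htt')
    dsimp only [φ]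
    gcongr
  set ψ : ℕ → ℝ := fun t => φ t ^ (m⁻¹ : ℝ)
  have hψ_pow : ∀ t, ψ t ^ m = φ t := fun t => Real.rpow_inv_natCast_pow (hφ_nonneg t) hm.ne'
  refine hΩ ψ
    (fun t t' h => Real.rpow_le_rpow (hφ_nonneg _) (hφ_anti h) (by positivity))
    (fun t => by positivity)
    (by simpa only [hψ_pow] using not_summable_pow_mul_div_firstAbove hn hε hs_double)
    (Set.finite_singleton 0 |>.subset fun q hq => ?_)
  by_contra hq0
  have hq1 : 1 ≤ znn q := Nat.one_le_iff_ne_zero.mpr (znn_eq_zero_iff.not.mpr hq0)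
  have hφq : φ (znn q) ≤ approxErr A γ q ^ m :=
    hs_scale _ q hq1 (le_apply_firstAbove hs (znn q))
  rw [← hψ_pow] at hφq
  exact ((pow_le_pow_iff_left₀ (by positivity) (approxErr_nonneg A γ q) hm.ne').mp hφq).not_gt hq

theorem omega_subset_sing (m n : ℕ) (hm : 0 < m) (hn : 0 < n)
    (A : Matrix (Fin m) (Fin n) ℝ) (γ : Fin m → ℝ)
    (hγ : ∀ i, 0 ≤ γ i ∧ γ i < 1)
    (hΩ : ∀ ψ : ℕ → ℝ, Antitone ψ → (∀ q, 0 ≤ ψ q) →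
        ¬ Summable (fun q : ℕ => (q : ℝ) ^ (n - 1) * ψ q ^ m) →
        {q : Fin n → ℤ | approxErr A γ q < ψ (znn q)}.Infinite) :
    ∀ ε : ℝ, 0 < ε → ∃ T₀ : ℕ, ∀ T : ℕ, T₀ ≤ T → ∃ q : Fin n → ℤ,
      1 ≤ znn q ∧ (znn q : ℝ) ^ n ≤ (T : ℝ) ∧ approxErr A γ q ^ m < ε / T :=
  omega_subset_sing_general m n hm hn A γ hΩ
end

section
/- Let m,n be positive integers and let A be an m×n matrix that is (homogeneously) badly approximable: there is c > 0 with ‖q‖^n ⟨Aq⟩^m ≥ c for all nonzero q ∈ ℤ^n. Suppose γ = Aq₀ + p₀ for some q₀ ∈ ℤ^n and p₀ ∈ ℤ^m. Then with l = ‖q₀‖ + 1, the series ∑_{t=l}^∞ t^{n-1} · (min_{l ≤ ‖q‖ ≤ t} ⟨Aq − γ⟩^m) diverges. -/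
open Filter

lemma dz_nonneg {m : ℕ} (y : Fin m → ℝ) : 0 ≤ dz y :=
  Real.iInf_nonneg fun _ => norm_nonneg _

lemma dz_sub_int {m : ℕ} (y : Fin m → ℝ) (p₀ : Fin m → ℤ) :
    dz (y - fun i => (p₀ i : ℝ)) = dz y := by
  unfold dz
  rw [iInf, iInf]
  congr 1
  ext x
  simp only [Set.mem_range]
  constructor
  · rintro ⟨p, rfl⟩
    refine ⟨p + p₀, ?_⟩
    congr 1
    funext i
    simp only [Pi.sub_apply, Pi.add_apply]
    push_cast
    ring
  · rintro ⟨p, rfl⟩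
    refine ⟨p - p₀, ?_⟩
    congr 1
    funext i
    simp only [Pi.sub_apply]
    push_cast
    ring

lemma approxErr_shift {m n : ℕ} (A : Matrix (Fin m) (Fin n) ℝ) (q₀ : Fin n → ℤ)
    (p₀ : Fin m → ℤ) (q : Fin n → ℤ) :
    approxErr A (A.mulVec (fun i => (q₀ i : ℝ)) + fun i => (p₀ i : ℝ)) q
      = approxErr A 0 (q - q₀) := by
  unfold approxErr
  have h : A.mulVec (fun i => (q i : ℝ)) -
      (A.mulVec (fun i => (q₀ i : ℝ)) + fun i => (p₀ i : ℝ))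
      = (A.mulVec (fun i => ((q - q₀) i : ℝ)) - 0) - fun i => (p₀ i : ℝ) := by
    have h2 : (fun i => ((q - q₀) i : ℝ)) = (fun i => (q i : ℝ)) - fun i => (q₀ i : ℝ) := by
      funext i; simp
    rw [h2, Matrix.mulVec_sub]
    abel
  rw [h, dz_sub_int]

lemma znn_sub_le {n : ℕ} (q q₀ : Fin n → ℤ) : znn (q - q₀) ≤ znn q + znn q₀ := by
  unfold znn
  apply Finset.sup_le
  intro i _
  calc ((q - q₀) i).natAbs ≤ (q i).natAbs + (q₀ i).natAbs := by
        simpa using Int.natAbs_sub_le (q i) (q₀ i)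
    _ ≤ _ := Nat.add_le_add
        (Finset.le_sup (f := fun i => (q i).natAbs) (Finset.mem_univ i))
        (Finset.le_sup (f := fun i => (q₀ i).natAbs) (Finset.mem_univ i))

lemma znn_const {n : ℕ} (hn : 0 < n) (a : ℕ) : znn (fun _ : Fin n => (a : ℤ)) = a := by
  haveI : Nonempty (Fin n) := ⟨⟨0, hn⟩⟩
  unfold znn
  simp [Finset.sup_const Finset.univ_nonempty]

theorem bad_rational_shift_diverges (m n : ℕ) (hm : 0 < m) (hn : 0 < n)
    (A : Matrix (Fin m) (Fin n) ℝ) (c : ℝ) (hc : 0 < c)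
    (hbad : ∀ q : Fin n → ℤ, q ≠ 0 → c ≤ (znn q : ℝ) ^ n * approxErr A 0 q ^ m)
    (γ : Fin m → ℝ) (q₀ : Fin n → ℤ) (p₀ : Fin m → ℤ)
    (hγ : γ = A.mulVec (fun i => (q₀ i : ℝ)) + fun i => (p₀ i : ℝ)) :
    ¬ Summable (fun t : ℕ =>
      if znn q₀ + 1 ≤ t then (t : ℝ) ^ (n - 1) * minErr A γ (znn q₀ + 1) t else 0) := by
  intro hs
  set k := znn q₀ with hk
  -- lower bound for minErr
  have hmin : ∀ t : ℕ, k + 1 ≤ t → c / ((t : ℝ) + k) ^ n ≤ minErr A γ (k + 1) t := by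
    intro t ht
    have htpos : (0 : ℝ) < (t : ℝ) + k := by
      have : (1 : ℝ) ≤ (t : ℝ) := by exact_mod_cast le_trans (Nat.le_add_left 1 k) ht
      linarith [Nat.cast_nonneg (α := ℝ) k]
    apply le_csInf
    · exact ⟨approxErr A γ (fun _ => ((k + 1 : ℕ) : ℤ)) ^ m,
        fun _ => ((k + 1 : ℕ) : ℤ), by rw [znn_const hn], by rw [znn_const hn]; exact ht, rfl⟩
    · rintro x ⟨q, hql, hqt, rfl⟩
      have hshift : approxErr A γ q = approxErr A 0 (q - q₀) := by
        rw [hγ]; exact approxErr_shift A q₀ p₀ q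
      have hne : q - q₀ ≠ 0 := by
        intro h
        rw [sub_eq_zero] at h
        rw [h] at hql
        omega
      have hb := hbad _ hne
      have hE : 0 ≤ approxErr A 0 (q - q₀) ^ m := pow_nonneg (dz_nonneg _) m
      have hzn : (znn (q - q₀) : ℝ) ≤ (t : ℝ) + k := by
        have h1 : znn (q - q₀) ≤ t + k := le_trans (znn_sub_le q q₀) (by omega)
        exact_mod_cast h1
      have hkey : c ≤ ((t : ℝ) + k) ^ n * approxErr A 0 (q - q₀) ^ m :=
        hb.trans (mul_le_mul_of_nonneg_right
          (pow_le_pow_left₀ (Nat.cast_nonneg _) hzn n) hE)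
      rw [hshift, div_le_iff₀ (pow_pos htpos n)]
      linarith
  -- pointwise comparison with c' / t
  have hc' : (0 : ℝ) < c / ((k : ℝ) + 1) ^ n := div_pos hc (by positivity)
  set c' := c / ((k : ℝ) + 1) ^ n with hc'def
  have hle : ∀ t : ℕ, (if k + 1 ≤ t then c' / t else 0)
      ≤ (if k + 1 ≤ t then (t : ℝ) ^ (n - 1) * minErr A γ (k + 1) t else 0) := by
    intro t
    by_cases ht : k + 1 ≤ t
    · rw [if_pos ht, if_pos ht]
      have ht1 : (1 : ℝ) ≤ (t : ℝ) := by exact_mod_cast le_trans (Nat.le_add_left 1 k) ht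
      have htpos : (0 : ℝ) < t := lt_of_lt_of_le one_pos ht1
      have h1 : ((t : ℝ) + k) ^ n ≤ (t : ℝ) ^ n * ((k : ℝ) + 1) ^ n := by
        rw [← mul_pow]
        apply pow_le_pow_left₀ (by positivity)
        nlinarith [Nat.cast_nonneg (α := ℝ) k]
      have h2 : c' / (t : ℝ) ^ n ≤ c / ((t : ℝ) + k) ^ n := by
        rw [hc'def, div_div, div_le_div_iff₀ (by positivity) (by positivity)]
        nlinarith [mul_le_mul_of_nonneg_left h1 hc.le]
      have h3 : c' / (t : ℝ) ^ n ≤ minErr A γ (k + 1) t := h2.trans (hmin t ht)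
      have h4 : (t : ℝ) ^ (n - 1) * (c' / (t : ℝ) ^ n) = c' / t := by
        have hpow : (t : ℝ) ^ n = (t : ℝ) ^ (n - 1) * t := by
          rw [← pow_succ]
          congr 1
          omega
        rw [hpow]
        field_simp
      calc c' / (t : ℝ) = (t : ℝ) ^ (n - 1) * (c' / (t : ℝ) ^ n) := h4.symm
        _ ≤ _ := mul_le_mul_of_nonneg_left h3 (by positivity)
    · rw [if_neg ht, if_neg ht]
  have hg : Summable (fun t : ℕ => if k + 1 ≤ t then c' / t else 0) := by
    apply hs.of_nonneg_of_le _ hle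
    intro t
    by_cases ht : k + 1 ≤ t
    · rw [if_pos ht]; positivity
    · rw [if_neg ht]
  -- derive summability of 1/t
  have hh : Summable (fun t : ℕ => if k + 1 ≤ t then (t : ℝ)⁻¹ else 0) := by
    have : (fun t : ℕ => if k + 1 ≤ t then c' / t else 0)
        = fun t : ℕ => c' * (if k + 1 ≤ t then (t : ℝ)⁻¹ else 0) := by
      funext t
      by_cases ht : k + 1 ≤ t
      · rw [if_pos ht, if_pos ht, div_eq_mul_inv]
      · rw [if_neg ht, if_neg ht, mul_zero]
    rw [this] at hg
    exact (summable_mul_left_iff hc'.ne').mp hg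
  have hshifted : Summable (fun t : ℕ => ((t + (k + 1) : ℕ) : ℝ)⁻¹) := by
    have := (summable_nat_add_iff (k + 1)).mpr hh
    refine this.congr fun t => ?_
    rw [if_pos (by omega)]
  have : Summable (fun t : ℕ => (t : ℝ)⁻¹) :=
    (summable_nat_add_iff (k + 1)).mp hshifted
  exact Real.not_summable_natCast_inv this
end
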